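/- Let k ∈ ℂ \ {0} and let V : (0,∞) → ℂ be measurable. Then (∫₀^∞ ∫₀^∞ |V(x)| |g_k(x,y)|² |V(y)| dx dy)^{1/2} ≤ |k|^{-1} ∫₀^∞ e^{2x(Im k)_−} |V(x)| dx. (The left-hand side is the Hilbert–Schmidt norm of the Birman–Schwinger operator with kernel √V(x) g_k(x,y) √|V(y)|; in particular this operator is Hilbert–Schmidt whenever the right-hand side is finite.) -/

import Mathlib

open MeasureTheory Set ENNReal

/-- The integral kernel of the resolvent `(-Δ - k²)⁻¹` of the Dirichlet Laplacian on the
half-line `(0,∞)`. -/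
noncomputable def halfLineResolventKernel (k : ℂ) (x y : ℝ) : ℂ :=
  (Complex.exp (Complex.I * k * (x + y)) - Complex.exp (Complex.I * k * |x - y|)) /
    (2 * Complex.I * k)

/-!
Both exponentials in `g_k(x,y)` have modulus at most `e^{(x+y)(Im k)_-}`, because
`|x - y| ≤ x + y` on the half-line. Hence `|g_k(x,y)|² ≤ |k|⁻² e^{2x(Im k)_-} e^{2y(Im k)_-}`
so the double integral is dominated by one that factorises into the square of `|k|⁻¹ ∫₀^∞ e^{2x(Im k)_-} |V(x)| dx`.
-/

lemma norm_exp_I_mul_ofReal_le (k : ℂ) {t : ℝ} (ht : 0 ≤ t) :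
    ‖Complex.exp (Complex.I * k * t)‖ ≤ Real.exp (t * max (-k.im) 0) := by
  rw [Complex.norm_exp, Real.exp_le_exp]
  have hre : (Complex.I * k * t).re = -k.im * t := by simp [Complex.mul_re]
  rw [hre, mul_comm t]
  exact mul_le_mul_of_nonneg_right (le_max_left _ _) ht

lemma norm_halfLineResolventKernel_le (k : ℂ) {x y : ℝ} (hx : 0 ≤ x) (hy : 0 ≤ y) :
    ‖halfLineResolventKernel k x y‖ ≤
      ‖k‖⁻¹ * (Real.exp (x * max (-k.im) 0) * Real.exp (y * max (-k.im) 0)) := by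
  set m := max (-k.im) 0
  have hm : 0 ≤ m := le_max_right _ _
  have h_sum : ‖Complex.exp (Complex.I * k * (x + y))‖ ≤ Real.exp ((x + y) * m) := by
    exact_mod_cast norm_exp_I_mul_ofReal_le k (add_nonneg hx hy)
  have h_diff : ‖Complex.exp (Complex.I * k * |x - y|)‖ ≤ Real.exp ((x + y) * m) := by
    refine (norm_exp_I_mul_ofReal_le k (abs_nonneg _)).trans (Real.exp_le_exp.mpr ?_)
    exact mul_le_mul_of_nonneg_right (abs_le.mpr ⟨by linarith, by linarith⟩) hm
  calc ‖halfLineResolventKernel k x y‖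
      ≤ (Real.exp ((x + y) * m) + Real.exp ((x + y) * m)) / (2 * ‖k‖) := by
        rw [halfLineResolventKernel, norm_div]
        simp only [norm_mul, Complex.norm_I, Complex.norm_ofNat, mul_one]
        gcongr
        exact (norm_sub_le _ _).trans (add_le_add h_sum h_diff)
    _ = ‖k‖⁻¹ * (Real.exp (x * m) * Real.exp (y * m)) := by
        rw [← two_mul, mul_div_mul_left _ _ two_ne_zero, add_mul, Real.exp_add,
          div_eq_inv_mul]

lemma norm_halfLineResolventKernel_sq_le (k : ℂ) {x y : ℝ} (hx : 0 ≤ x) (hy : 0 ≤ y) :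
    ‖halfLineResolventKernel k x y‖ ^ 2 ≤
      ‖k‖⁻¹ ^ 2 * (Real.exp (2 * x * max (-k.im) 0) * Real.exp (2 * y * max (-k.im) 0)) := by
  calc ‖halfLineResolventKernel k x y‖ ^ 2
      ≤ (‖k‖⁻¹ * (Real.exp (x * max (-k.im) 0) * Real.exp (y * max (-k.im) 0))) ^ 2 :=
        pow_le_pow_left₀ (norm_nonneg _) (norm_halfLineResolventKernel_le k hx hy) 2
    _ = _ := by
        simp only [mul_pow, ← Real.exp_nat_mul, Nat.cast_ofNat, mul_assoc]

theorem hilbertSchmidt_bound_halfline_general (k : ℂ) (V : ℝ → ℂ)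
    (hV : Measurable V) :
    (∫⁻ x in Ioi (0 : ℝ), ∫⁻ y in Ioi (0 : ℝ),
        ENNReal.ofReal (‖V x‖ *
          ‖halfLineResolventKernel k x y‖ ^ 2 * ‖V y‖))
        ^ ((1 : ℝ) / 2) ≤
      ENNReal.ofReal ‖k‖⁻¹ *
        ∫⁻ x in Ioi (0 : ℝ),
          ENNReal.ofReal (Real.exp (2 * x * max (-k.im) 0) * ‖V x‖) := by
  set w : ℝ → ℝ := fun x ↦ ‖k‖⁻¹ * (Real.exp (2 * x * max (-k.im) 0) * ‖V x‖)
  have hw : Measurable fun x ↦ ENNReal.ofReal (w x) := by fun_prop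
  have h_pointwise : ∀ x ∈ Ioi (0 : ℝ), ∀ y ∈ Ioi (0 : ℝ),
      ENNReal.ofReal (‖V x‖ * ‖halfLineResolventKernel k x y‖ ^ 2 * ‖V y‖) ≤
        ENNReal.ofReal (w x) * ENNReal.ofReal (w y) := by
    intro x hx y hy
    rw [← ENNReal.ofReal_mul (by positivity)]
    refine ENNReal.ofReal_le_ofReal ?_
    calc ‖V x‖ * ‖halfLineResolventKernel k x y‖ ^ 2 * ‖V y‖
        ≤ ‖V x‖ * (‖k‖⁻¹ ^ 2 * (Real.exp (2 * x * max (-k.im) 0) *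
            Real.exp (2 * y * max (-k.im) 0))) * ‖V y‖ := by
          gcongr
          exact norm_halfLineResolventKernel_sq_le k hx.le hy.le
      _ = w x * w y := by ring
  rw [one_div, ENNReal.rpow_inv_le_iff two_pos, ENNReal.rpow_two, sq]
  calc _ ≤ ∫⁻ x in Ioi (0 : ℝ), ∫⁻ y in Ioi (0 : ℝ), ENNReal.ofReal (w x) * ENNReal.ofReal (w y) :=
        setLIntegral_mono' measurableSet_Ioi fun x hx ↦
          setLIntegral_mono' measurableSet_Ioi (h_pointwise x hx)
    _ = (∫⁻ x in Ioi (0 : ℝ), ENNReal.ofReal (w x)) * ∫⁻ y in Ioi (0 : ℝ), ENNReal.ofReal (w y) :=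
        lintegral_lintegral_mul hw.aemeasurable hw.aemeasurable
    _ = _ := by
        simp only [w, ENNReal.ofReal_mul (inv_nonneg.mpr (norm_nonneg k))]
        rw [lintegral_const_mul' _ _ ofReal_ne_top]

/-- The Hilbert–Schmidt bound for the Birman–Schwinger operator on the half-line:
`(∫₀^∞∫₀^∞ |V(x)||g_k(x,y)|²|V(y)| dx dy)^{1/2} ≤ |k|⁻¹ ∫₀^∞ e^{2x(Im k)_-}|V(x)| dx`,
stated with extended-real-valued integrals. -/
theorem hilbertSchmidt_bound_halfline (k : ℂ) (hk : k ≠ 0) (V : ℝ → ℂ)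
    (hV : Measurable V) :
    (∫⁻ x in Ioi (0 : ℝ), ∫⁻ y in Ioi (0 : ℝ),
        ENNReal.ofReal (‖V x‖ *
          ‖halfLineResolventKernel k x y‖ ^ 2 * ‖V y‖))
        ^ ((1 : ℝ) / 2) ≤
      ENNReal.ofReal ‖k‖⁻¹ *
        ∫⁻ x in Ioi (0 : ℝ),
          ENNReal.ofReal (Real.exp (2 * x * max (-k.im) 0) * ‖V x‖) :=
  hilbertSchmidt_bound_halfline_general k V hV
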